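/- For all β, a, t ∈ ℝ, with t₀ := log μ_h(a) = −log √(1+a²), one has Φ(γ_{β,a}(t + t₀)) = γ^E_{β, arctan a}(μ_h(a)·tanh t) = e^{i(β+arctan a+π)}·μ_h(a)·(tanh t + i·a). -/

import Mathlib

/-!
With `s = √(1 + a²)`, `E = eᵗ` and `c = 1 + a i` (so `c c̄ = s²` and `e^{i arctan a} = c / s`), the
shift `t₀ = -log s` turns `x̂(t + t₀)` into `(E - s)/(E + s)`, and then
`γ_{β,a}(t + t₀) = -e^{iβ} · p / q` with `p = cE - s`, `q = c̄E + s`.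
The map `Φ` commutes with rotations and `Φ(p/q) = 2 p q̄ / (|p|² + |q|²)`. Here `q̄ = cE + s`, the cross
terms of `|p|² + |q|²` cancel, and `|c| = s` gives `2 p q̄ / (|p|² + |q|²) = c (cE² - c̄) / (s² (E² + 1))`,
which is `c (tanh t + i a) / s² = e^{i arctan a} · μ_h(a) · (tanh t + i a)`.
-/

noncomputable section

/-- `x̂(t) = tanh(t/2)`. -/
def xhat (t : ℝ) : ℝ := Real.tanh (t / 2)

/-- Horocyclic parameterization of hyperbolic geodesics in the Poincaré disk. -/
def γH (β a t : ℝ) : ℂ :=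
  Complex.exp (Complex.I * (β : ℂ)) *
    (((2 + Complex.I * (a : ℂ)) * (xhat t : ℂ) + Complex.I * (a : ℂ)) /
      (Complex.I * (a : ℂ) * (xhat t : ℂ) - 2 + Complex.I * (a : ℂ)))

/-- The projective map `Φ(z) = 2z/(1+|z|²)`. -/
def Φm (z : ℂ) : ℂ := 2 * z / (((1 + ‖z‖ ^ 2 : ℝ)) : ℂ)

/-- `μ_h(a) = (1+a²)^{−1/2}`. -/
def μh (a : ℝ) : ℝ := (1 + a ^ 2) ^ (-(1 : ℝ) / 2)

/-- Fan-beam parameterization of Euclidean chords of the unit disk. -/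
def γE (β α u : ℝ) : ℂ :=
  Complex.exp (Complex.I * ((β + α + Real.pi : ℝ) : ℂ)) *
    ((u : ℂ) + Complex.I * ((Real.sin α : ℝ) : ℂ))

open Complex ComplexConjugate

lemma Φm_mul_of_norm_eq_one {w : ℂ} (hw : ‖w‖ = 1) (z : ℂ) : Φm (w * z) = w * Φm z := by
  simp only [Φm, norm_mul, hw, one_mul]
  ring

lemma Φm_div (p : ℂ) {q : ℂ} (hq : q ≠ 0) :
    Φm (p / q) = 2 * p * conj q / ((normSq p + normSq q : ℝ) : ℂ) := by
  have hnq : (normSq q : ℂ) ≠ 0 := by exact_mod_cast (normSq_pos.2 hq).ne'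
  have hq' : p / q = p * conj q / (normSq q : ℂ) := by
    rw [div_eq_mul_inv, inv_def, ofReal_inv, div_eq_mul_inv, mul_assoc]
  rw [Φm, norm_div, div_pow, ← normSq_eq_norm_sq, ← normSq_eq_norm_sq, hq']
  push_cast
  field_simp
  ring

lemma Real.tanh_half_eq (v : ℝ) : Real.tanh (v / 2) = (Real.exp v - 1) / (Real.exp v + 1) := by
  have hv : Real.exp v = Real.exp (v / 2) ^ 2 := by rw [sq, ← Real.exp_add, add_halves]
  rw [Real.tanh_eq, Real.exp_neg, hv]
  have := Real.exp_pos (v / 2)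
  field_simp

lemma Real.tanh_eq_exp_sq (t : ℝ) :
    Real.tanh t = (Real.exp t ^ 2 - 1) / (Real.exp t ^ 2 + 1) := by
  rw [← Real.exp_nat_mul, ← mul_div_cancel_left₀ t (two_ne_zero' ℝ), Real.tanh_half_eq]
  push_cast
  ring_nf

lemma μh_eq_inv_sqrt (a : ℝ) : μh a = (√(1 + a ^ 2))⁻¹ := by
  rw [μh, neg_div, Real.rpow_neg (by positivity), ← Real.sqrt_eq_rpow]

lemma exp_I_mul_arctan (a : ℝ) : exp (I * Real.arctan a) = (1 + a * I) / √(1 + a ^ 2) := by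
  rw [mul_comm, exp_mul_I, ← ofReal_cos, ← ofReal_sin, Real.cos_arctan, Real.sin_arctan]
  push_cast
  ring

lemma γE_arctan (β a u : ℝ) :
    γE β (Real.arctan a) (μh a * u) =
      exp (I * ((β + Real.arctan a + Real.pi : ℝ) : ℂ)) * (μh a * (u + I * a)) := by
  rw [γE, Real.sin_arctan, μh_eq_inv_sqrt]
  push_cast
  ring

lemma γH_sub_log (β a t : ℝ) {s : ℝ} (hs : 0 < s) :
    γH β a (t - Real.log s) =
      -exp (I * β) * (((1 + a * I) * Real.exp t - s) / ((1 - a * I) * Real.exp t + s)) := by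
  rw [γH, xhat, Real.tanh_half_eq, Real.exp_sub, Real.exp_log hs]
  have hE := Real.exp_pos t
  generalize Real.exp t = E at *
  have hx : (E / s - 1) / (E / s + 1) = (E - s) / (E + s) := by
    field_simp
  have hEs : (E + s : ℂ) ≠ 0 := by exact_mod_cast (by positivity : E + s ≠ 0)
  have hscale : (2 / (E + s) : ℂ) ≠ 0 := div_ne_zero two_ne_zero hEs
  have hnum : (2 + I * a) * (((E - s) / (E + s) : ℝ) : ℂ) + I * a =
      ((1 + a * I) * E - s) * (2 / (E + s)) := by
    push_cast
    field_simp
    ring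
  have hden : I * a * (((E - s) / (E + s) : ℝ) : ℂ) - 2 + I * a =
      -((1 - a * I) * E + s) * (2 / (E + s)) := by
    push_cast
    field_simp
    ring
  rw [hx, hnum, hden, mul_div_mul_right _ _ hscale, div_neg, mul_neg, neg_mul]

lemma Φm_chord {a s E : ℝ} (hs : 0 < s) (hs2 : s ^ 2 = 1 + a ^ 2) (hE : 0 < E) :
    Φm (((1 + a * I) * E - s) / ((1 - a * I) * E + s)) =
      (1 + a * I) * (((E ^ 2 - 1) / (E ^ 2 + 1) : ℝ) + a * I) / (s ^ 2 : ℝ) := by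
  have hp : normSq ((1 + a * I) * E - s) = (E - s) ^ 2 + (a * E) ^ 2 := by
    rw [show (1 + a * I) * E - s = ((E - s : ℝ) : ℂ) + ((a * E : ℝ) : ℂ) * I by push_cast; ring,
      normSq_add_mul_I]
  have hq : normSq ((1 - a * I) * E + s) = (E + s) ^ 2 + (a * E) ^ 2 := by
    rw [show (1 - a * I) * E + s = ((E + s : ℝ) : ℂ) + ((-(a * E) : ℝ) : ℂ) * I by push_cast; ring,
      normSq_add_mul_I, neg_sq]
  have hden : ((1 - a * I) * E + s : ℂ) ≠ 0 := normSq_pos.1 (by rw [hq]; positivity)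
  have hnorm : normSq ((1 + a * I) * E - s) + normSq ((1 - a * I) * E + s) =
      2 * s ^ 2 * (E ^ 2 + 1) := by
    rw [hp, hq]
    linear_combination -2 * E ^ 2 * hs2
  rw [Φm_div _ hden, hnorm]
  have : (E ^ 2 + 1 : ℂ) ≠ 0 := by exact_mod_cast (by positivity : E ^ 2 + 1 ≠ 0)
  have hs' : (s : ℂ) ≠ 0 := by exact_mod_cast hs.ne'
  have hs2' : (s : ℂ) ^ 2 = 1 + a ^ 2 := by exact_mod_cast hs2
  simp only [map_add, map_sub, map_mul, map_one, conj_ofReal, conj_I]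
  push_cast
  field_simp
  linear_combination -(a : ℂ) ^ 2 * I_sq - hs2'

/-- With `t₀ = log μ_h(a) = −log √(1+a²)`:
`Φ(γ_{β,a}(t + t₀)) = γ^E_{β, arctan a}(μ_h(a)·tanh t)
 = e^{i(β+arctan a+π)}·μ_h(a)·(tanh t + i·a)`. -/
theorem projective_equivalence_horocyclic (β a t : ℝ) :
    Φm (γH β a (t + Real.log (μh a))) = γE β (Real.arctan a) (μh a * Real.tanh t) ∧
    Φm (γH β a (t + Real.log (μh a))) =
      Complex.exp (Complex.I * ((β + Real.arctan a + Real.pi : ℝ) : ℂ)) *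
        ((μh a : ℂ) * (((Real.tanh t : ℝ) : ℂ) + Complex.I * (a : ℂ))) := by
  rw [γE_arctan, and_self, μh_eq_inv_sqrt, Real.log_inv, ← sub_eq_add_neg]
  have hs : 0 < √(1 + a ^ 2) := by positivity
  have hw : ‖-exp (I * β)‖ = 1 := by
    rw [norm_neg, mul_comm, norm_exp_ofReal_mul_I]
  have hrot : exp (I * ((β + Real.arctan a + Real.pi : ℝ) : ℂ)) =
      -exp (I * β) * ((1 + a * I) / √(1 + a ^ 2)) := by
    rw [ofReal_add, ofReal_add, mul_add, mul_add, exp_add, exp_add, exp_I_mul_arctan,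
      mul_comm I (Real.pi : ℂ), exp_pi_mul_I]
    ring
  rw [γH_sub_log β a t hs, Φm_mul_of_norm_eq_one hw,
    Φm_chord hs (Real.sq_sqrt (by positivity)) (Real.exp_pos t), ← Real.tanh_eq_exp_sq, hrot]
  have : ((√(1 + a ^ 2) : ℝ) : ℂ) ≠ 0 := by exact_mod_cast hs.ne'
  push_cast
  field_simp
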